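/- arXiv:1405.4794 — 9 statements merged into one kernel-verified Lean document; each statement's English description precedes it below -/
import Mathlib

section
/- Let R be a (not necessarily commutative) ring, ζ ∈ R central, and x, y ∈ R with x² = 1 + ζx and y² = 1 + ζy. Define the m-th braid commutator Δ_m(x,y) := xyx⋯ (m factors) − yxy⋯ (m factors), and τ_r as the recursion τ_{-1}=0, τ_0=1, τ_r = T·τ_{r-1} − τ_{r-2}. Then for all r ≥ 0, Δ_{r+1}(x,y) = (−1)^r · τ_r(x + y − ζ) · (x − y). -/
open Polynomial

/-- The polynomials τ_r ∈ ℤ[T] defined by τ_{-1} = 0, τ_0 = 1, τ_r = T·τ_{r-1} − τ_{r-2}. -/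
noncomputable def tau : ℕ → Polynomial ℤ
  | 0 => 1
  | 1 => X
  | (n + 2) => X * tau (n + 1) - tau n

/-- The alternating product with m factors: `altProd m x y = x·y·x·⋯` (m factors). -/
def altProd {R : Type*} [Ring R] : ℕ → R → R → R
  | 0, _, _ => 1
  | (n + 1), x, y => x * altProd n y x

/-- The m-th braid commutator Δ_m(x,y) = xyx⋯ (m factors) − yxy⋯ (m factors). -/
def braidComm {R : Type*} [Ring R] (m : ℕ) (x y : R) : R :=
  altProd m x y - altProd m y x

/-! With `s = x + y - ζ` the quadratic relations read `s * x = 1 + y * x` and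
`s * y = 1 + x * y`. Multiplying `Δ_{n+1}` on the left by `s` therefore yields
`Δ_{n+2} = -s Δ_{n+1} - Δ_n`, which is the recurrence of `(-1)^r τ_r(s)`; both sides of the
theorem agree for `r = 0, 1`. -/

section BraidCommutator

variable {R : Type*} [Ring R] {x y s : R}

theorem mul_altProd_succ (hsx : s * x = 1 + y * x) (n : ℕ) :
    s * altProd (n + 1) x y = altProd n y x + altProd (n + 2) y x := by
  simp only [altProd, ← mul_assoc, hsx, add_mul, one_mul]

theorem braidComm_add_two (hsx : s * x = 1 + y * x) (hsy : s * y = 1 + x * y) (n : ℕ) :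
    braidComm (n + 2) x y = -(s * braidComm (n + 1) x y) - braidComm n x y := by
  simp only [braidComm, mul_sub, mul_altProd_succ hsx, mul_altProd_succ hsy]
  abel

end BraidCommutator

theorem aeval_tau_add_two {R : Type*} [Ring R] (s : R) (n : ℕ) :
    aeval s (tau (n + 2)) = s * aeval s (tau (n + 1)) - aeval s (tau n) := by
  simp only [tau, map_sub, map_mul, aeval_X]

theorem braidComm_eq_tau_general {R : Type*} [Ring R] (ζ x y : R)
    (hx : x ^ 2 = 1 + ζ * x) (hy : y ^ 2 = 1 + ζ * y) (r : ℕ) :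
    braidComm (r + 1) x y = (-1) ^ r * (Polynomial.aeval (x + y - ζ) (tau r)) * (x - y) := by
  set s := x + y - ζ
  have hsx : s * x = 1 + y * x := by rw [sub_mul, add_mul, ← sq, hx]; abel
  have hsy : s * y = 1 + x * y := by rw [sub_mul, add_mul, ← sq, hy]; abel
  induction r using Nat.twoStepInduction with
  | zero => simp [braidComm, altProd, tau]
  | one =>
    rw [braidComm_add_two hsx hsy, zero_add]
    simp [braidComm, altProd, tau]
  | more n ih₀ ih₁ =>
    have hs : s * (-1) ^ n = (-1) ^ n * s := ((Commute.neg_one_left s).pow_left n).eq.symm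
    rw [braidComm_add_two hsx hsy, ih₀, ih₁, aeval_tau_add_two, pow_succ, pow_succ]
    simp only [neg_neg, neg_mul, mul_neg, ← mul_assoc s, hs]
    noncomm_ring

/-- If ζ is central and x² = 1 + ζx, y² = 1 + ζy, then for all r ≥ 0,
Δ_{r+1}(x,y) = (−1)^r · τ_r(x + y − ζ) · (x − y). -/
theorem braidComm_eq_tau {R : Type*} [Ring R] (ζ x y : R)
    (hζ : ∀ a : R, ζ * a = a * ζ)
    (hx : x ^ 2 = 1 + ζ * x) (hy : y ^ 2 = 1 + ζ * y) (r : ℕ) :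
    braidComm (r + 1) x y = (-1) ^ r * (Polynomial.aeval (x + y - ζ) (tau r)) * (x - y) :=
  braidComm_eq_tau_general ζ x y hx hy r
end

section
/- For every integer m ≥ 1, the product over all integers a with 1 ≤ a < m/2 of (2cos(aπ/m))² equals 1 if m is odd and equals m/2 if m is even. -/
/-!
Put `ζ = exp (2πi/m)`. Then `(2 cos (aπ/m))² = |1 + ζ^a|²`, and the factors for `a` and `m - a`
agree, so the square of the product is `|∏ (1 + ζ^a)|²` over `0 < a < m`, `2a ≠ m`.
Since `∏_{a<m} (X + ζ^a) = X^m - (-1)^m`, this product is read off by evaluating at `1` when `m`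
is odd, and by differentiating at the simple root `1` when `m` is even; in both cases one divides
by the factor `2` at `a = 0`.
-/

open Real Finset

open Polynomial in
theorem Polynomial.eval_derivative_X_add_C_mul {R : Type*} [CommRing R] {c x : R}
    (h : x + c = 0) (q : R[X]) : eval x (derivative ((X + C c) * q)) = eval x q := by
  simp [derivative_mul, h]

theorem Finset.prod_filter_two_mul_ne_eq_sq {M : Type*} [CommMonoid M] {m : ℕ} {g : ℕ → M}
    (hg : ∀ a < m, g (m - a) = g a) :
    ∏ a ∈ (range m).filter (fun a => 1 ≤ a ∧ 2 * a ≠ m), g a =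
      (∏ a ∈ (range m).filter (fun a => 1 ≤ a ∧ 2 * a < m), g a) ^ 2 := by
  rw [← prod_filter_mul_prod_filter_not _ (fun a => 2 * a < m), filter_filter, filter_filter, sq]
  congr 1
  · exact prod_congr (by ext; simp only [mem_filter, mem_range]; omega) fun _ _ => rfl
  · refine prod_nbij' (m - ·) (m - ·) ?_ ?_ ?_ ?_ ?_ <;> intro a ha <;>
      simp only [mem_filter, mem_range] at ha ⊢
    all_goals first | omega | exact (hg a (by omega)).symm

theorem sq_two_mul_cos_eq_normSq_one_add_exp (x : ℝ) :
    (2 * cos x) ^ 2 = Complex.normSq (1 + Complex.exp (↑(2 * x) * Complex.I)) := by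
  have : 1 + Complex.exp (↑(2 * x) * Complex.I) = Complex.exp (x * Complex.I) * ↑(2 * cos x) := by
    push_cast
    rw [Complex.two_cos, mul_add, ← Complex.exp_add, ← Complex.exp_add, neg_mul, add_neg_cancel,
      Complex.exp_zero]
    ring_nf
  rw [this, map_mul, Complex.normSq_ofReal, Complex.normSq_eq_norm_sq, Complex.norm_exp_ofReal_mul_I]
  ring

namespace IsPrimitiveRoot

section Domain

open Polynomial

variable {R : Type*} [CommRing R] [IsDomain R] {m : ℕ} {ζ : R}

theorem prod_X_add_C_pow_eq (hζ : IsPrimitiveRoot ζ m) (hm : 0 < m) :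
    ∏ a ∈ range m, (X + C (ζ ^ a)) = X ^ m - C ((-1) ^ m) := by
  rw [X_pow_sub_C_eq_prod hζ hm (α := -1) rfl]
  simp [sub_eq_add_neg]

theorem prod_one_add_pow_of_odd [NeZero (2 : R)] (hζ : IsPrimitiveRoot ζ m) (hm : Odd m) :
    ∏ a ∈ (range m).erase 0, (1 + ζ ^ a) = 1 := by
  have h := congrArg (eval 1) (hζ.prod_X_add_C_pow_eq hm.pos)
  rw [← mul_prod_erase _ _ (mem_range.2 hm.pos)] at h
  simp only [eval_mul, eval_prod, eval_add, eval_X, eval_C, eval_sub, eval_pow, one_pow,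
    pow_zero, hm.neg_one_pow] at h
  exact mul_left_cancel₀ two_ne_zero (by linear_combination h)

theorem two_mul_prod_one_add_pow_of_even {n : ℕ} (hζ : IsPrimitiveRoot ζ (2 * n)) (hn : 0 < n) :
    2 * ∏ a ∈ ((range (2 * n)).erase n).erase 0, (1 + ζ ^ a) = 2 * n := by
  have hm : 0 < 2 * n := by omega
  have hζn : ζ ^ n = -1 := (hζ.pow hm (by ring)).eq_neg_one_of_two_right
  have h := congrArg (fun p => eval 1 (derivative p)) (hζ.prod_X_add_C_pow_eq hm)
  simp only [← mul_prod_erase _ _ (mem_range.2 (by omega : n < 2 * n))] at h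
  rw [eval_derivative_X_add_C_mul (by rw [hζn, add_neg_cancel]),
    ← mul_prod_erase _ _ (mem_erase.2 ⟨hn.ne, mem_range.2 hm⟩)] at h
  simp only [eval_prod, eval_add, eval_X, eval_C, pow_zero, derivative_sub, derivative_C,
    sub_zero, derivative_X_pow, eval_mul, eval_pow, one_pow, mul_one, Nat.cast_mul,
    Nat.cast_ofNat] at h
  linear_combination h

end Domain

theorem prod_one_add_pow_filter {K : Type*} [Field K] [CharZero K] {m : ℕ}
    {ζ : K} (hζ : IsPrimitiveRoot ζ m) (hm : 0 < m) :
    ∏ a ∈ (range m).filter (fun a => 1 ≤ a ∧ 2 * a ≠ m), (1 + ζ ^ a) =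
      if m % 2 = 1 then 1 else (m : K) / 2 := by
  split_ifs with hodd
  · have hs : (range m).filter (fun a => 1 ≤ a ∧ 2 * a ≠ m) = (range m).erase 0 := by
      ext; simp only [mem_filter, mem_erase, mem_range]; omega
    rw [hs, hζ.prod_one_add_pow_of_odd (Nat.odd_iff.2 hodd)]
  · obtain ⟨n, rfl⟩ : 2 ∣ m := by omega
    have hs : (range (2 * n)).filter (fun a => 1 ≤ a ∧ 2 * a ≠ 2 * n) =
        ((range (2 * n)).erase n).erase 0 := by
      ext; simp only [mem_filter, mem_erase, mem_range]; omega
    rw [hs, eq_div_iff two_ne_zero, mul_comm, hζ.two_mul_prod_one_add_pow_of_even (by omega)]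
    push_cast
    ring

end IsPrimitiveRoot

/-- For every integer m ≥ 1, the product over integers a with 1 ≤ a < m/2 of
(2cos(aπ/m))² equals 1 if m is odd and m/2 if m is even.
(For a natural number a, the condition a < m/2 is expressed as 2a < m.) -/
theorem prod_sq_two_cos (m : ℕ) (hm : 1 ≤ m) :
    ∏ a ∈ (Finset.range m).filter (fun a => 1 ≤ a ∧ 2 * a < m),
      (2 * Real.cos (a * Real.pi / m)) ^ 2 =
    if m % 2 = 1 then 1 else (m : ℝ) / 2 := by
  set ζ := Complex.exp (2 * π * Complex.I / m)
  have hζ : IsPrimitiveRoot ζ m := Complex.isPrimitiveRoot_exp m (by omega)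
  have hg (a : ℕ) : (2 * cos (a * π / m)) ^ 2 = Complex.normSq (1 + ζ ^ a) := by
    rw [sq_two_mul_cos_eq_normSq_one_add_exp, ← Complex.exp_nat_mul]
    congr 2
    push_cast
    field_simp
  have hsq := prod_filter_two_mul_ne_eq_sq (g := fun a : ℕ => (2 * cos (a * π / m)) ^ 2)
    fun a ha => by
      rw [Nat.cast_sub ha.le, sub_mul, sub_div, mul_div_cancel_left₀ _ (by positivity), cos_pi_sub]
      ring
  rw [prod_congr rfl fun a _ => hg a, ← map_prod, hζ.prod_one_add_pow_filter (by omega)] at hsq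
  rw [← sq_eq_sq₀ (prod_nonneg fun _ _ => sq_nonneg _) (by split_ifs <;> positivity), ← hsq]
  split_ifs <;> simp [sq, div_mul_div_comm]
end

section
/- Let k be a subring of ℂ containing 2cos(2π/m) and 1/m for some integer m ≥ 3. Then for every integer a not divisible by m/2 (i.e., 2a not divisible by m), the element 4cos(aπ/m)² is a unit in k. -/
/-!
With `ζ = exp (2πi/m)` and `w = ζ ^ a` we have `4 cos² (aπ/m) = 2 + w + w⁻¹`, and
`(2 + w + w⁻¹)(1 - w)(1 - w⁻¹) = (1 - w²)(1 - w⁻²)`. Since `w² ≠ 1`, the right-hand side is one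
of the factors of `∏_{0<j<m} (1 - ζ^j)(1 - ζ^{-j}) = m²`. Every factor of that product, and
`2 + w + w⁻¹` itself, lies in `k` because `u + u⁻¹` is an integer polynomial in `ζ + ζ⁻¹` for
every power `u` of `ζ`; as `1/m ∈ k`, `2 + w + w⁻¹` is a unit of `k`.
-/

open Real Finset

theorem Subring.pow_add_pow_mem {R : Type*} [CommRing R] (S : Subring R) {x y : R}
    (hxy : x * y = 1) (h : x + y ∈ S) : ∀ n : ℕ, x ^ n + y ^ n ∈ S
  | 0 => by simpa only [pow_zero, one_add_one_eq_two] using ofNat_mem S 2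
  | 1 => by simpa only [pow_one] using h
  | n + 2 => by
    have step : x ^ (n + 2) + y ^ (n + 2) =
        (x + y) * (x ^ (n + 1) + y ^ (n + 1)) - (x ^ n + y ^ n) := by
      linear_combination (-(x ^ n + y ^ n)) * hxy
    rw [step]
    exact S.sub_mem (S.mul_mem h (S.pow_add_pow_mem hxy h _)) (S.pow_add_pow_mem hxy h n)

namespace IsPrimitiveRoot

variable {K : Type*} [Field K] {k : Subring K} {m : ℕ} [NeZero m] {ζ w : K}

theorem add_inv_mem_of_pow_eq_one (hζ : IsPrimitiveRoot ζ m) (h : ζ + ζ⁻¹ ∈ k)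
    (hw : w ^ m = 1) : w + w⁻¹ ∈ k := by
  obtain ⟨i, -, rfl⟩ := hζ.eq_pow_of_pow_eq_one hw
  rw [← inv_pow]
  exact k.pow_add_pow_mem (mul_inv_cancel₀ (hζ.ne_zero (NeZero.ne m))) h i

theorem one_sub_mul_one_sub_inv_mem (hζ : IsPrimitiveRoot ζ m) (h : ζ + ζ⁻¹ ∈ k)
    (hw : w ^ m = 1) : (1 - w) * (1 - w⁻¹) ∈ k := by
  have hw0 : w ≠ 0 := by rintro rfl; simp [NeZero.ne m] at hw
  have : (1 - w) * (1 - w⁻¹) = 2 - (w + w⁻¹) := by field_simp; ring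
  rw [this]
  exact k.sub_mem (ofNat_mem k 2) (hζ.add_inv_mem_of_pow_eq_one h hw)

theorem prod_Ico_one_sub_pow (hζ : IsPrimitiveRoot ζ m) :
    ∏ j ∈ Ico 1 m, (1 - ζ ^ j) = m := by
  obtain ⟨n, rfl⟩ := Nat.exists_eq_add_one_of_ne_zero (NeZero.ne m)
  simpa only [prod_Ico_eq_prod_range, add_tsub_cancel_right, add_comm 1, Nat.cast_add_one] using
    hζ.prod_one_sub_pow_eq_order

theorem prod_Ico_one_sub_pow_mul_one_sub_inv_pow (hζ : IsPrimitiveRoot ζ m) :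
    ∏ j ∈ Ico 1 m, (1 - ζ ^ j) * (1 - (ζ ^ j)⁻¹) = (m : K) ^ 2 := by
  simp_rw [prod_mul_distrib, ← inv_pow, hζ.prod_Ico_one_sub_pow, hζ.inv.prod_Ico_one_sub_pow, sq]

theorem exists_mul_eq_sq_of_pow_eq_one (hζ : IsPrimitiveRoot ζ m) (h : ζ + ζ⁻¹ ∈ k)
    (hw : w ^ m = 1) (hw1 : w ≠ 1) : ∃ z ∈ k, (1 - w) * (1 - w⁻¹) * z = (m : K) ^ 2 := by
  obtain ⟨i, hi, rfl⟩ := hζ.eq_pow_of_pow_eq_one hw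
  have hi0 : i ≠ 0 := by rintro rfl; exact hw1 (pow_zero ζ)
  refine ⟨∏ j ∈ (Ico 1 m).erase i, (1 - ζ ^ j) * (1 - (ζ ^ j)⁻¹), ?_, ?_⟩
  · exact k.prod_mem fun j _ ↦
      hζ.one_sub_mul_one_sub_inv_mem h (by rw [pow_right_comm, hζ.pow_eq_one, one_pow])
  · rw [mul_prod_erase _ (fun j ↦ (1 - ζ ^ j) * (1 - (ζ ^ j)⁻¹)) (mem_Ico.mpr ⟨by omega, hi⟩)]
    exact hζ.prod_Ico_one_sub_pow_mul_one_sub_inv_pow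

theorem two_add_add_inv_mem_and_exists_mul_eq_one (hζ : IsPrimitiveRoot ζ m)
    (h : ζ + ζ⁻¹ ∈ k) (hinv : (m : K)⁻¹ ∈ k) (hw : w ^ m = 1) (hw2 : w ^ 2 ≠ 1) :
    2 + w + w⁻¹ ∈ k ∧ ∃ y ∈ k, (2 + w + w⁻¹) * y = 1 := by
  have hw0 : w ≠ 0 := by rintro rfl; simp [NeZero.ne m] at hw
  have hm : (m : K) ≠ 0 := (hζ.neZero').ne
  have hw2m : (w ^ 2) ^ m = 1 := by rw [pow_right_comm, hw, one_pow]
  obtain ⟨z, hz, hmul⟩ := hζ.exists_mul_eq_sq_of_pow_eq_one h hw2m hw2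
  have hfactor : (2 + w + w⁻¹) * ((1 - w) * (1 - w⁻¹)) = (1 - w ^ 2) * (1 - (w ^ 2)⁻¹) := by
    field_simp; ring
  refine ⟨add_assoc 2 w w⁻¹ ▸ k.add_mem (ofNat_mem k 2) (hζ.add_inv_mem_of_pow_eq_one h hw),
    (1 - w) * (1 - w⁻¹) * z * (m : K)⁻¹ ^ 2, ?_, ?_⟩
  · exact k.mul_mem (k.mul_mem (hζ.one_sub_mul_one_sub_inv_mem h hw) hz) (k.pow_mem hinv 2)
  · rw [← mul_assoc, ← mul_assoc, hfactor, hmul, inv_pow, mul_inv_cancel₀ (pow_ne_zero 2 hm)]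

end IsPrimitiveRoot

theorem Complex.ofReal_two_mul_cos (θ : ℝ) :
    ((2 * Real.cos θ : ℝ) : ℂ) = exp (θ * I) + (exp (θ * I))⁻¹ := by
  rw [ofReal_mul, ofReal_cos, ofReal_ofNat, two_cos, neg_mul, exp_neg]

theorem Complex.ofReal_four_mul_cos_sq (θ : ℝ) :
    ((4 * Real.cos θ ^ 2 : ℝ) : ℂ) = 2 + ((2 * Real.cos (2 * θ) : ℝ) : ℂ) := by
  rw [Real.cos_sq]
  push_cast
  ring

/-- If k ⊆ ℂ is a subring containing 2cos(2π/m) and 1/m (m ≥ 3), then for every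
integer a with 2a not divisible by m, the element 4cos(aπ/m)² is a unit of k:
it belongs to k and has a multiplicative inverse in k. -/
theorem four_cos_sq_unit (m : ℕ) (hm : 3 ≤ m) (k : Subring ℂ)
    (hcos : ((2 * Real.cos (2 * Real.pi / m) : ℝ) : ℂ) ∈ k)
    (hinv : ((m : ℂ))⁻¹ ∈ k) (a : ℤ) (ha : ¬ ((m : ℤ) ∣ 2 * a)) :
    ((4 * Real.cos (a * Real.pi / m) ^ 2 : ℝ) : ℂ) ∈ k ∧
    ∃ y ∈ k, ((4 * Real.cos (a * Real.pi / m) ^ 2 : ℝ) : ℂ) * y = 1 := by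
  have : NeZero m := ⟨by omega⟩
  set ζ := Complex.exp ((2 * π / m : ℝ) * Complex.I)
  have hζ : IsPrimitiveRoot ζ m := by
    convert Complex.isPrimitiveRoot_exp m (NeZero.ne m) using 2
    push_cast
    ring
  have hx : ((4 * Real.cos (a * π / m) ^ 2 : ℝ) : ℂ) = 2 + ζ ^ a + (ζ ^ a)⁻¹ := by
    rw [Complex.ofReal_four_mul_cos_sq, Complex.ofReal_two_mul_cos, ← Complex.exp_int_mul,
      add_assoc]
    push_cast
    ring_nf
  have hw : (ζ ^ a) ^ m = 1 := by
    rw [← zpow_natCast, ← zpow_mul, hζ.zpow_eq_one_iff_dvd]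
    exact dvd_mul_left _ _
  have hw2 : (ζ ^ a) ^ 2 ≠ 1 := by
    rwa [Ne, ← zpow_natCast, ← zpow_mul, mul_comm, Nat.cast_ofNat, hζ.zpow_eq_one_iff_dvd]
  rw [hx]
  exact hζ.two_add_add_inv_mem_and_exists_mul_eq_one
    (Complex.ofReal_two_mul_cos _ ▸ hcos) hinv hw hw2
end

section
/- Let k be a subring of ℂ containing 2cos(2π/m) and 1/m for some integer m ≥ 3. Then for all integers a, b with 1 ≤ a < b ≤ ⌊m/2⌋, the element 4cos(aπ/m)² − 4cos(bπ/m)² is a unit of k. -/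
/-!
Put `θ = 2π/m`. By `cos² t = (1 + cos 2t)/2` the element is `x = 2cos(aθ) - 2cos(bθ)`, which lies
in `k` because `2cos(nθ)` is an integral Chebyshev polynomial in `2cos θ`. Moreover
`x² = (2 - 2cos((b-a)θ)) (2 - 2cos((a+b)θ))` with `1 ≤ b - a < a + b < m`. Since
`2 - 2cos(cθ) = |1 - ζ^c|²` for `ζ = e^{iθ}` and `∏_{c=1}^{m-1} (1 - ζ^c) = m`, the product of all
the `2 - 2cos(cθ)` is `m²`; so `x` divides `m²` in `k`, a unit there.
-/

open Real Finset Polynomial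

theorem Subring.aeval_mem {A : Type*} [Ring A] (k : Subring A) {x : A} (hx : x ∈ k)
    (p : ℤ[X]) : aeval x p ∈ k := by
  have h := aeval_mem_adjoin_singleton ℤ (p := p) x
  rw [Algebra.adjoin_int, mem_subalgebraOfSubring] at h
  exact Subring.closure_le.mpr (Set.singleton_subset_iff.mpr hx) h

theorem Subring.exists_mul_eq_one_of_mul_eq {K : Type*} [DivisionRing K] {k : Subring K}
    {x y u : K} (hy : y ∈ k) (hu : u⁻¹ ∈ k) (hu0 : u ≠ 0) (h : x * y = u) :
    ∃ z ∈ k, x * z = 1 :=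
  ⟨y * u⁻¹, mul_mem hy hu, by rw [← mul_assoc, h, mul_inv_cancel₀ hu0]⟩

theorem two_cos_nat_mul_mem {k : Subring ℂ} {θ : ℝ} (h : ((2 * cos θ : ℝ) : ℂ) ∈ k) (n : ℕ) :
    ((2 * cos (n * θ) : ℝ) : ℂ) ∈ k := by
  have hC := k.aeval_mem h (Chebyshev.C ℤ n)
  rw [Chebyshev.aeval_C] at hC
  push_cast at hC ⊢
  rwa [Chebyshev.C_two_mul_complex_cos, Int.cast_natCast] at hC

theorem Complex.normSq_one_sub_exp_ofReal_mul_I (x : ℝ) :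
    normSq (1 - exp (x * I)) = 2 - 2 * Real.cos x := by
  rw [normSq_apply]
  simp only [sub_re, one_re, exp_ofReal_mul_I_re, sub_im, one_im, exp_ofReal_mul_I_im]
  linear_combination Real.sin_sq_add_cos_sq x

theorem prod_two_sub_two_cos {m : ℕ} (hm : m ≠ 0) :
    ∏ c ∈ Ico 1 m, (2 - 2 * cos (c * (2 * π / m))) = (m : ℝ) ^ 2 := by
  obtain ⟨n, rfl⟩ : ∃ n, m = n + 1 := ⟨m - 1, by omega⟩
  have h := congrArg Complex.normSq
    (Complex.isPrimitiveRoot_exp (n + 1) hm).prod_one_sub_pow_eq_order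
  rw [map_prod, ← Nat.cast_succ, Complex.normSq_natCast, ← sq] at h
  rw [prod_Ico_eq_prod_range, Nat.add_sub_cancel, ← h]
  refine prod_congr rfl fun c _ => ?_
  rw [← Complex.exp_nat_mul, ← Complex.normSq_one_sub_exp_ofReal_mul_I]
  push_cast
  ring_nf

theorem sq_two_cos_sub_two_cos (A B : ℝ) :
    (2 * cos A - 2 * cos B) ^ 2 = (2 - 2 * cos (B - A)) * (2 - 2 * cos (A + B)) := by
  rw [cos_sub, cos_add]
  linear_combination (4 * sin B ^ 2) * sin_sq_add_cos_sq A
    + (4 - 4 * cos A ^ 2) * sin_sq_add_cos_sq B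

theorem exists_mem_two_sub_two_cos_mul_eq_sq {k : Subring ℂ} {m i j : ℕ} (hm : m ≠ 0)
    (hcos : ((2 * cos (2 * π / m) : ℝ) : ℂ) ∈ k) (hi : i ∈ Ico 1 m)
    (hj : j ∈ (Ico 1 m).erase i) :
    ∃ q : ℝ, (q : ℂ) ∈ k ∧
      (2 - 2 * cos (i * (2 * π / m))) * (2 - 2 * cos (j * (2 * π / m))) * q = (m : ℝ) ^ 2 := by
  refine ⟨∏ c ∈ ((Ico 1 m).erase i).erase j, (2 - 2 * cos (c * (2 * π / m))), ?_, ?_⟩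
  · rw [Complex.ofReal_prod]
    refine prod_mem fun c _ => ?_
    rw [Complex.ofReal_sub, Complex.ofReal_ofNat]
    exact sub_mem (natCast_mem k 2) (two_cos_nat_mul_mem hcos c)
  · set f : ℕ → ℝ := fun c => 2 - 2 * cos (c * (2 * π / m))
    rw [mul_assoc, mul_prod_erase _ f hj, mul_prod_erase _ f hi, prod_two_sub_two_cos hm]

theorem four_cos_sq_sub_unit_general (m : ℕ) (k : Subring ℂ)
    (hcos : ((2 * Real.cos (2 * Real.pi / m) : ℝ) : ℂ) ∈ k)
    (hinv : ((m : ℂ))⁻¹ ∈ k) (a b : ℕ)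
    (ha : 1 ≤ a) (hab : a < b) (hb : b ≤ m / 2) :
    ((4 * Real.cos (a * Real.pi / m) ^ 2 - 4 * Real.cos (b * Real.pi / m) ^ 2 : ℝ) : ℂ) ∈ k ∧
    ∃ y ∈ k,
      ((4 * Real.cos (a * Real.pi / m) ^ 2 - 4 * Real.cos (b * Real.pi / m) ^ 2 : ℝ) : ℂ) * y
        = 1 := by
  set θ := 2 * π / m
  have hx : 4 * cos (a * π / m) ^ 2 - 4 * cos (b * π / m) ^ 2
      = 2 * cos (a * θ) - 2 * cos (b * θ) := by
    simp only [θ, cos_sq]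
    ring_nf
  have hx_mem : ((2 * cos (a * θ) - 2 * cos (b * θ) : ℝ) : ℂ) ∈ k := by
    rw [Complex.ofReal_sub]
    exact sub_mem (two_cos_nat_mul_mem hcos a) (two_cos_nat_mul_mem hcos b)
  obtain ⟨q, hq, hxq⟩ := exists_mem_two_sub_two_cos_mul_eq_sq (i := b - a) (j := a + b)
    (by omega) hcos (by rw [mem_Ico]; omega) (by rw [mem_erase, mem_Ico]; omega)
  have hsq : (2 * cos (a * θ) - 2 * cos (b * θ)) ^ 2
      = (2 - 2 * cos ((b - a : ℕ) * θ)) * (2 - 2 * cos ((a + b : ℕ) * θ)) := by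
    rw [sq_two_cos_sub_two_cos]
    push_cast [Nat.cast_sub hab.le]
    ring_nf
  rw [hx]
  have hm : (m : ℂ) ≠ 0 := Nat.cast_ne_zero.mpr (by omega)
  refine ⟨hx_mem, Subring.exists_mul_eq_one_of_mul_eq (u := (m : ℂ) ^ 2) (mul_mem hx_mem hq)
    (by rw [← inv_pow]; exact pow_mem hinv 2) (pow_ne_zero 2 hm) ?_⟩
  rw [← mul_assoc, ← sq]
  exact_mod_cast hsq ▸ hxq

/-- If k ⊆ ℂ is a subring containing 2cos(2π/m) and 1/m (m ≥ 3), then for all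
integers a, b with 1 ≤ a < b ≤ ⌊m/2⌋, the element 4cos(aπ/m)² − 4cos(bπ/m)² is a
unit of k: it belongs to k and has a multiplicative inverse in k. -/
theorem four_cos_sq_sub_unit (m : ℕ) (hm : 3 ≤ m) (k : Subring ℂ)
    (hcos : ((2 * Real.cos (2 * Real.pi / m) : ℝ) : ℂ) ∈ k)
    (hinv : ((m : ℂ))⁻¹ ∈ k) (a b : ℕ)
    (ha : 1 ≤ a) (hab : a < b) (hb : b ≤ m / 2) :
    ((4 * Real.cos (a * Real.pi / m) ^ 2 - 4 * Real.cos (b * Real.pi / m) ^ 2 : ℝ) : ℂ) ∈ k ∧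
    ∃ y ∈ k,
      ((4 * Real.cos (a * Real.pi / m) ^ 2 - 4 * Real.cos (b * Real.pi / m) ^ 2 : ℝ) : ℂ) * y
        = 1 :=
  four_cos_sq_sub_unit_general m k hcos hinv a b ha hab hb
end

section
/- The algebra Ξ freely generated over ℤ by elements e_s, x_s (s ∈ S, S finite) subject to the relations e_s² = e_s, e_s e_t = e_t e_s, e_s x_s = x_s, x_s e_s = 0, is isomorphic to the path algebra ℤQ of the quiver Q whose vertices are the subsets of S and which has exactly |I∖J| edges from J to I for each pair of subsets I, J ⊆ S. -/
open FreeAlgebra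

/-- The defining relations of Gyoja's algebra Ξ: for each s ∈ S a generator e_s
(encoded `Sum.inl s`) and a generator x_s (encoded `Sum.inr s`), subject to
e_s² = e_s, e_s e_t = e_t e_s, e_s x_s = x_s, x_s e_s = 0. -/
inductive XiRel (S : Type) [Fintype S] [DecidableEq S] :
    FreeAlgebra ℤ (S ⊕ S) → FreeAlgebra ℤ (S ⊕ S) → Prop
  | idem (s : S) : XiRel S (ι ℤ (Sum.inl s) * ι ℤ (Sum.inl s)) (ι ℤ (Sum.inl s))
  | comm (s t : S) : XiRel S (ι ℤ (Sum.inl s) * ι ℤ (Sum.inl t))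
      (ι ℤ (Sum.inl t) * ι ℤ (Sum.inl s))
  | ex (s : S) : XiRel S (ι ℤ (Sum.inl s) * ι ℤ (Sum.inr s)) (ι ℤ (Sum.inr s))
  | xe (s : S) : XiRel S (ι ℤ (Sum.inr s) * ι ℤ (Sum.inl s)) 0

/-- Gyoja's algebra Ξ: the ℤ-algebra freely generated by e_s, x_s (s ∈ S) subject to
e_s² = e_s, e_s e_t = e_t e_s, e_s x_s = x_s, x_s e_s = 0. -/
abbrev Xi (S : Type) [Fintype S] [DecidableEq S] := RingQuot (XiRel S)

/-- The edges of the quiver Q: for each pair of vertices I, J ⊆ S there are exactly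
|I∖J| edges from J to I, indexed by the elements of I∖J. -/
abbrev QEdge (S : Type) [Fintype S] [DecidableEq S] :=
  Σ I : Finset S, Σ J : Finset S, {s : S // s ∈ I \ J}

/-- The defining relations of the path algebra ℤQ of the quiver Q whose vertices are
the subsets of S: the vertex idempotents are orthogonal and sum to 1, and each edge
element ê (from J to I) satisfies E_I · ê · E_J = ê. -/
inductive PathRel (S : Type) [Fintype S] [DecidableEq S] :
    FreeAlgebra ℤ (Finset S ⊕ QEdge S) → FreeAlgebra ℤ (Finset S ⊕ QEdge S) → Prop
  | vtx (I J : Finset S) : PathRel S (ι ℤ (Sum.inl I) * ι ℤ (Sum.inl J))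
      (if I = J then ι ℤ (Sum.inl I) else 0)
  | sum : PathRel S (∑ I : Finset S, ι ℤ (Sum.inl I)) 1
  | edge (a : QEdge S) :
      PathRel S (ι ℤ (Sum.inl a.1) * ι ℤ (Sum.inr a) * ι ℤ (Sum.inl a.2.1))
        (ι ℤ (Sum.inr a))

/-- The path algebra ℤQ over the quiver Q with vertex set the power set of S and
exactly |I∖J| edges from J to I for each pair of vertices I, J ⊆ S. -/
abbrev PathAlg (S : Type) [Fintype S] [DecidableEq S] := RingQuot (PathRel S)

/-!
The relations on the `e_s` say exactly that they are commuting idempotents, so `e_s` is the image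
of `χ_s = [s ∈ K]` under a ring map from `ℤ^{𝒫(S)}`, the free commutative ring on `|S|`
idempotents. The images `F_I` of its primitive idempotents `δ_I` form a complete family of
orthogonal idempotents of `Ξ`, which play the role of the vertex idempotents `E_I`. Since
`x_s = e_s x_s (1 - e_s)`, expanding `e_s = ∑_{s ∈ I} F_I` and `1 - e_s = ∑_{s ∉ J} F_J` splits
`x_s` into the pieces `F_I x_s F_J` with `s ∈ I ∖ J`, one for each edge `J → I` labelled `s`.
Conversely, sending `e_s` to `∑_{s ∈ K} E_K` and `x_s` to the sum of the edges labelled `s`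
defines the inverse map.
-/

section IntPi

variable {R : Type*} [Ring R] {ι : Type*} [DecidableEq ι]

theorem OrthogonalIdempotents.mul_eq_ite_of_mul_eq {e : ι → R} (he : OrthogonalIdempotents e)
    {i : ι} {x : R} (hx : e i * x = x) (k : ι) : e k * x = if k = i then x else 0 := by
  calc e k * x = e k * e i * x := by rw [mul_assoc, hx]
    _ = _ := by rw [he.mul_eq]; split_ifs with h <;> simp [h, hx]

theorem OrthogonalIdempotents.mul_eq_ite_of_mul_eq' {e : ι → R} (he : OrthogonalIdempotents e)
    {j : ι} {x : R} (hx : x * e j = x) (k : ι) : x * e k = if k = j then x else 0 := by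
  calc x * e k = x * (e j * e k) := by rw [← mul_assoc, hx]
    _ = _ := by
      rcases eq_or_ne k j with rfl | h
      · simp [he.mul_eq, hx]
      · simp [he.mul_eq, h, h.symm]

variable [Fintype ι]

theorem RingHom.apply_eq_sum_smul_single (f : (ι → ℤ) →+* R) (c : ι → ℤ) :
    f c = ∑ i, c i • f (Pi.single i 1) := by
  conv_lhs => rw [← Finset.univ_sum_single c]
  refine (map_sum f _ _).trans (Finset.sum_congr rfl fun i _ => ?_)
  rw [← map_zsmul, ← Pi.single_smul', smul_eq_mul, mul_one]

namespace CompleteOrthogonalIdempotents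

variable {e : ι → R} (he : CompleteOrthogonalIdempotents e)

noncomputable def toIntPiHom : (ι → ℤ) →+* R where
  toFun c := ∑ i, c i • e i
  map_one' := by simpa using he.complete
  map_mul' c d := by
    simp only [Finset.sum_mul_sum, smul_mul_smul_comm, he.mul_eq, smul_ite, smul_zero,
      Finset.sum_ite_eq, Finset.mem_univ, if_true, Pi.mul_apply]
  map_zero' := by simp
  map_add' c d := by simp [add_smul, Finset.sum_add_distrib]

theorem toIntPiHom_apply (c : ι → ℤ) : he.toIntPiHom c = ∑ i, c i • e i := rfl

theorem toIntPiHom_single (i : ι) : he.toIntPiHom (Pi.single i 1) = e i := by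
  simp [toIntPiHom_apply, Pi.single_apply]

theorem toIntPiHom_mul_of_mul_eq {i : ι} {x : R} (hx : e i * x = x) (c : ι → ℤ) :
    he.toIntPiHom c * x = c i • x := by
  simp only [toIntPiHom_apply, Finset.sum_mul, smul_mul_assoc, he.1.mul_eq_ite_of_mul_eq hx,
    smul_ite, smul_zero, Finset.sum_ite_eq', Finset.mem_univ, if_true]

theorem mul_toIntPiHom_of_mul_eq {j : ι} {x : R} (hx : x * e j = x) (c : ι → ℤ) :
    x * he.toIntPiHom c = c j • x := by
  simp only [toIntPiHom_apply, Finset.mul_sum, mul_smul_comm, he.1.mul_eq_ite_of_mul_eq' hx,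
    smul_ite, smul_zero, Finset.sum_ite_eq', Finset.mem_univ, if_true]

end CompleteOrthogonalIdempotents

end IntPi

section BooleanAtoms

variable {ι : Type*} [DecidableEq ι]

def memIndicator (s : ι) (K : Finset ι) : ℤ := if s ∈ K then 1 else 0

theorem isIdempotentElem_memIndicator (s : ι) : IsIdempotentElem (memIndicator s) := by
  ext K; simp only [Pi.mul_apply, memIndicator]; split_ifs <;> norm_num

variable [Fintype ι] {R : Type*} [CommRing R]

def idemAtom (e : ι → R) (I : Finset ι) : R := (∏ t ∈ I, e t) * ∏ t ∈ Iᶜ, (1 - e t)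

theorem sum_idemAtom (e : ι → R) : ∑ I, idemAtom e I = 1 := by
  simpa [idemAtom, ← Finset.compl_eq_univ_sdiff] using
    (Finset.prod_add e (fun t => 1 - e t) Finset.univ).symm

variable {e : ι → R} (he : ∀ i, IsIdempotentElem (e i))
include he

theorem mul_idemAtom (s : ι) (I : Finset ι) :
    e s * idemAtom e I = if s ∈ I then idemAtom e I else 0 := by
  unfold idemAtom
  split_ifs with hs
  · rw [← mul_assoc, ← Finset.mul_prod_erase I e hs, ← mul_assoc, (he s).eq]
  · rw [← Finset.mul_prod_erase Iᶜ _ (Finset.mem_compl.mpr hs), mul_left_comm, ← mul_assoc,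
      mul_assoc _ (e s), ← mul_assoc (e s), (he s).mul_one_sub_self, zero_mul, mul_zero]

theorem completeOrthogonalIdempotents_idemAtom : CompleteOrthogonalIdempotents (idemAtom e) := by
  refine CompleteOrthogonalIdempotents.iff_ortho_complete.mpr ⟨?_, sum_idemAtom e⟩
  -- an element of `I ∆ J` acts as `1` on one atom and as `0` on the other
  have key {I J : Finset ι} {t : ι} (hI : t ∈ I) (hJ : t ∉ J) :
      idemAtom e I * idemAtom e J = 0 :=
    calc idemAtom e I * idemAtom e J = e t * idemAtom e I * idemAtom e J := by
          rw [mul_idemAtom he, if_pos hI]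
      _ = idemAtom e I * (e t * idemAtom e J) := by ring
      _ = 0 := by rw [mul_idemAtom he, if_neg hJ, mul_zero]
  intro I J hIJ
  obtain ⟨t, ht⟩ := Finset.symmDiff_nonempty.mpr hIJ
  rcases Finset.mem_symmDiff.mp ht with ⟨hI, hJ⟩ | ⟨hJ, hI⟩
  · exact key hI hJ
  · rw [mul_comm]; exact key hJ hI

theorem toIntPiHom_idemAtom_memIndicator (s : ι) :
    (completeOrthogonalIdempotents_idemAtom he).toIntPiHom (memIndicator s) = e s := by
  simp only [CompleteOrthogonalIdempotents.toIntPiHom_apply, memIndicator, ite_smul, one_smul,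
    zero_smul, ← mul_idemAtom he, ← Finset.mul_sum, sum_idemAtom, mul_one]

end BooleanAtoms

section FreeBooleanRing

variable {ι : Type*} [Fintype ι] [DecidableEq ι]

theorem idemAtom_memIndicator (I : Finset ι) : idemAtom memIndicator I = Pi.single I 1 := by
  ext K
  have one_sub (t : ι) : (1 - if t ∈ K then 1 else 0 : ℤ) = if t ∉ K then 1 else 0 := by
    split_ifs <;> simp_all
  simp only [idemAtom, Pi.mul_apply, Finset.prod_apply, Pi.sub_apply, Pi.one_apply, memIndicator,
    one_sub, Finset.prod_boole, boole_mul, Pi.single_apply]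
  by_cases hK : K = I
  · subst hK; simp
  · rw [if_neg hK]
    split_ifs with hIK hKI
    · exact absurd (Finset.ext fun t => by by_cases ht : t ∈ I <;> simp_all) hK
    all_goals rfl

theorem closure_range_memIndicator :
    Subring.closure (Set.range (memIndicator (ι := ι))) = ⊤ := by
  refine eq_top_iff.mpr fun c _ => ?_
  rw [← Finset.univ_sum_single c]
  refine Subring.sum_mem _ fun I _ => ?_
  rw [← mul_one (c I), ← smul_eq_mul, Pi.single_smul', ← idemAtom_memIndicator]
  have mem (s : ι) : memIndicator s ∈ Subring.closure (Set.range memIndicator) :=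
    Subring.subset_closure ⟨s, rfl⟩
  exact Subring.zsmul_mem _ (Subring.mul_mem _ (Subring.prod_mem _ fun s _ => mem s)
    (Subring.prod_mem _ fun s _ => Subring.sub_mem _ (Subring.one_mem _) (mem s))) _

variable {R : Type*} [Ring R]

omit [Fintype ι] [DecidableEq ι] in
theorem isMulCommutative_closure_range {e : ι → R} (hc : ∀ i j, Commute (e i) (e j)) :
    IsMulCommutative (Subring.closure (Set.range e)) :=
  Subring.isMulCommutative_closure (by rintro _ ⟨i, rfl⟩ _ ⟨j, rfl⟩; exact hc i j)

theorem ringHom_ext_memIndicator {f g : (Finset ι → ℤ) →+* R}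
    (h : ∀ s, f (memIndicator s) = g (memIndicator s)) : f = g :=
  RingHom.eq_of_eqOn_set_dense closure_range_memIndicator (by rintro _ ⟨s, rfl⟩; exact h s)

open scoped IsMulCommutative in
theorem exists_ringHom_memIndicator {e : ι → R} (he : ∀ i, IsIdempotentElem (e i))
    (hc : ∀ i j, Commute (e i) (e j)) :
    ∃ f : (Finset ι → ℤ) →+* R, ∀ s, f (memIndicator s) = e s := by
  let C := Subring.closure (Set.range e)
  have := isMulCommutative_closure_range hc
  let e' (i : ι) : C := ⟨e i, Subring.subset_closure ⟨i, rfl⟩⟩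
  have he' (i : ι) : IsIdempotentElem (e' i) := Subtype.ext (he i)
  exact ⟨C.subtype.comp (completeOrthogonalIdempotents_idemAtom he').toIntPiHom,
    fun s => congrArg Subtype.val (toIntPiHom_idemAtom_memIndicator he' s)⟩

end FreeBooleanRing

namespace Xi

variable {S : Type} [Fintype S] [DecidableEq S]

noncomputable def e (s : S) : Xi S := RingQuot.mkAlgHom ℤ (XiRel S) (ι ℤ (Sum.inl s))

noncomputable def x (s : S) : Xi S := RingQuot.mkAlgHom ℤ (XiRel S) (ι ℤ (Sum.inr s))

theorem isIdempotentElem_e (s : S) : IsIdempotentElem (e s) := by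
  simpa [e, IsIdempotentElem] using RingQuot.mkAlgHom_rel ℤ (XiRel.idem s)

theorem commute_e (s t : S) : Commute (e s) (e t) := by
  simpa [e, Commute, SemiconjBy] using RingQuot.mkAlgHom_rel ℤ (XiRel.comm s t)

theorem e_mul_x (s : S) : e s * x s = x s := by
  simpa [e, x] using RingQuot.mkAlgHom_rel ℤ (XiRel.ex s)

theorem x_mul_e (s : S) : x s * e s = 0 := by
  simpa [e, x] using RingQuot.mkAlgHom_rel ℤ (XiRel.xe s)

noncomputable def boolHom : (Finset S → ℤ) →+* Xi S :=
  (exists_ringHom_memIndicator isIdempotentElem_e commute_e).choose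

theorem boolHom_memIndicator (s : S) : boolHom (memIndicator s) = e s :=
  (exists_ringHom_memIndicator isIdempotentElem_e commute_e).choose_spec s

noncomputable def atom (I : Finset S) : Xi S := boolHom (Pi.single I 1)

theorem completeOrthogonalIdempotents_atom : CompleteOrthogonalIdempotents (atom (S := S)) :=
  (CompleteOrthogonalIdempotents.single fun _ => ℤ).map boolHom

end Xi

namespace PathAlg

variable {S : Type} [Fintype S] [DecidableEq S]

noncomputable def vertex (I : Finset S) : PathAlg S :=
  RingQuot.mkAlgHom ℤ (PathRel S) (ι ℤ (Sum.inl I))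

noncomputable def arrow (a : QEdge S) : PathAlg S :=
  RingQuot.mkAlgHom ℤ (PathRel S) (ι ℤ (Sum.inr a))

theorem completeOrthogonalIdempotents_vertex :
    CompleteOrthogonalIdempotents (vertex (S := S)) where
  toOrthogonalIdempotents := OrthogonalIdempotents.iff_mul_eq.mpr fun I J => by
    simpa [vertex, apply_ite (RingQuot.mkAlgHom ℤ (PathRel S))] using
      RingQuot.mkAlgHom_rel ℤ (PathRel.vtx (S := S) I J)
  complete := by simpa [vertex] using RingQuot.mkAlgHom_rel ℤ (PathRel.sum (S := S))

theorem vertex_mul_arrow_mul_vertex (a : QEdge S) :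
    vertex a.1 * arrow a * vertex a.2.1 = arrow a := by
  simpa [vertex, arrow] using RingQuot.mkAlgHom_rel ℤ (PathRel.edge a)

theorem vertex_mul_arrow (a : QEdge S) : vertex a.1 * arrow a = arrow a := by
  conv_lhs => rw [← vertex_mul_arrow_mul_vertex]
  rw [← mul_assoc, ← mul_assoc, (completeOrthogonalIdempotents_vertex.idem a.1).eq,
    vertex_mul_arrow_mul_vertex]

theorem arrow_mul_vertex (a : QEdge S) : arrow a * vertex a.2.1 = arrow a := by
  conv_lhs => rw [← vertex_mul_arrow_mul_vertex]
  rw [mul_assoc, (completeOrthogonalIdempotents_vertex.idem a.2.1).eq,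
    vertex_mul_arrow_mul_vertex]

noncomputable def diag : (Finset S → ℤ) →+* PathAlg S :=
  completeOrthogonalIdempotents_vertex.toIntPiHom

noncomputable def arrowSum (s : S) : PathAlg S :=
  ∑ I, ∑ J, if h : s ∈ I \ J then arrow ⟨I, J, s, h⟩ else 0

theorem diag_memIndicator_mul_arrowSum (s : S) :
    diag (memIndicator s) * arrowSum s = arrowSum s := by
  simp only [arrowSum, Finset.mul_sum, mul_dite, mul_zero]
  refine Finset.sum_congr rfl fun I _ => Finset.sum_congr rfl fun J _ => dite_congr rfl
    (fun h => ?_) fun _ => rfl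
  rw [diag, completeOrthogonalIdempotents_vertex.toIntPiHom_mul_of_mul_eq (vertex_mul_arrow _),
    memIndicator, if_pos (Finset.mem_sdiff.mp h).1, one_smul]

theorem arrowSum_mul_diag_memIndicator (s : S) :
    arrowSum s * diag (memIndicator s) = 0 := by
  simp only [arrowSum, Finset.sum_mul, dite_mul, zero_mul]
  refine Finset.sum_eq_zero fun I _ => Finset.sum_eq_zero fun J _ => dite_eq_right_iff.mpr
    fun h => ?_
  rw [diag, completeOrthogonalIdempotents_vertex.mul_toIntPiHom_of_mul_eq (arrow_mul_vertex _),
    memIndicator, if_neg (Finset.mem_sdiff.mp h).2, zero_zsmul]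

theorem vertex_mul_arrowSum_mul_vertex (a : QEdge S) :
    vertex a.1 * arrowSum (a.2.2 : S) * vertex a.2.1 = arrow a := by
  obtain ⟨I, J, s, h⟩ := a
  have hV := (completeOrthogonalIdempotents_vertex (S := S)).toOrthogonalIdempotents
  simp only [arrowSum, Finset.mul_sum, Finset.sum_mul]
  rw [Finset.sum_eq_single I, Finset.sum_eq_single J, dif_pos h]
  · exact vertex_mul_arrow_mul_vertex ⟨I, J, s, h⟩
  · intro J' _ hJ'
    split_ifs with h'
    · rw [mul_assoc, hV.mul_eq_ite_of_mul_eq' (arrow_mul_vertex ⟨I, J', s, h'⟩),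
        if_neg (Ne.symm hJ'), mul_zero]
    · rw [mul_zero, zero_mul]
  · simp
  · intro I' _ hI'
    refine Finset.sum_eq_zero fun J' _ => ?_
    split_ifs with h'
    · rw [hV.mul_eq_ite_of_mul_eq (vertex_mul_arrow ⟨I', J', s, h'⟩), if_neg (Ne.symm hI'),
        zero_mul]
    · rw [mul_zero, zero_mul]
  · simp

end PathAlg

namespace Xi

variable {S : Type} [Fintype S] [DecidableEq S]

noncomputable def toPathAlg : Xi S →ₐ[ℤ] PathAlg S :=
  RingQuot.liftAlgHom ℤ ⟨FreeAlgebra.lift ℤ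
    (Sum.elim (fun s => PathAlg.diag (memIndicator s)) PathAlg.arrowSum), by
    rintro _ _ (s | ⟨s, t⟩ | s | s) <;>
      simp only [map_mul, map_zero, FreeAlgebra.lift_ι_apply, Sum.elim_inl, Sum.elim_inr]
    · exact ((isIdempotentElem_memIndicator s).map PathAlg.diag).eq
    · rw [← map_mul, ← map_mul, mul_comm]
    · exact PathAlg.diag_memIndicator_mul_arrowSum s
    · exact PathAlg.arrowSum_mul_diag_memIndicator s⟩

theorem toPathAlg_e (s : S) : toPathAlg (e s) = PathAlg.diag (memIndicator s) := by
  simp [toPathAlg, e]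

theorem toPathAlg_x (s : S) : toPathAlg (x s) = PathAlg.arrowSum s := by
  simp [toPathAlg, x]

theorem toPathAlg_comp_boolHom :
    ((toPathAlg : Xi S →ₐ[ℤ] PathAlg S) : Xi S →+* PathAlg S).comp boolHom = PathAlg.diag :=
  ringHom_ext_memIndicator fun s => by
    simp [boolHom_memIndicator, toPathAlg_e]

theorem toPathAlg_atom (I : Finset S) : toPathAlg (atom I) = PathAlg.vertex I := by
  rw [atom, ← AlgHom.coe_toRingHom, ← RingHom.comp_apply, toPathAlg_comp_boolHom, PathAlg.diag,
    CompleteOrthogonalIdempotents.toIntPiHom_single]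

end Xi

namespace PathAlg

variable {S : Type} [Fintype S] [DecidableEq S]

noncomputable def toXi : PathAlg S →ₐ[ℤ] Xi S :=
  RingQuot.liftAlgHom ℤ ⟨FreeAlgebra.lift ℤ
    (Sum.elim Xi.atom fun a => Xi.atom a.1 * Xi.x (a.2.2 : S) * Xi.atom a.2.1), by
    have hF := Xi.completeOrthogonalIdempotents_atom (S := S)
    rintro _ _ (⟨I, J⟩ | _ | a) <;>
      simp only [map_mul, map_sum, map_one, map_zero, apply_ite (FreeAlgebra.lift ℤ _),
        FreeAlgebra.lift_ι_apply, Sum.elim_inl, Sum.elim_inr]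
    · exact hF.mul_eq I J
    · exact hF.complete
    · calc Xi.atom a.1 * (Xi.atom a.1 * Xi.x (a.2.2 : S) * Xi.atom a.2.1) * Xi.atom a.2.1
          = Xi.atom a.1 * Xi.atom a.1 * Xi.x (a.2.2 : S) * (Xi.atom a.2.1 * Xi.atom a.2.1) := by
            simp only [mul_assoc]
        _ = Xi.atom a.1 * Xi.x (a.2.2 : S) * Xi.atom a.2.1 := by
            rw [(hF.idem a.1).eq, (hF.idem a.2.1).eq]⟩

theorem toXi_vertex (I : Finset S) : toXi (vertex I) = Xi.atom I := by
  simp [toXi, vertex]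

theorem toXi_arrow (a : QEdge S) :
    toXi (arrow a) = Xi.atom a.1 * Xi.x (a.2.2 : S) * Xi.atom a.2.1 := by
  simp [toXi, arrow]

theorem toXi_diag (c : Finset S → ℤ) : toXi (diag c) = Xi.boolHom c := by
  rw [diag, CompleteOrthogonalIdempotents.toIntPiHom_apply, map_sum,
    RingHom.apply_eq_sum_smul_single Xi.boolHom]
  simp only [map_zsmul, toXi_vertex, Xi.atom]

theorem toXi_arrowSum (s : S) : toXi (arrowSum s) = Xi.x s := by
  have hx : Xi.x s = Xi.boolHom (memIndicator s) * Xi.x s * Xi.boolHom (1 - memIndicator s) := by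
    rw [map_sub, map_one, Xi.boolHom_memIndicator, Xi.e_mul_x, mul_sub, mul_one, Xi.x_mul_e,
      sub_zero]
  rw [hx, RingHom.apply_eq_sum_smul_single Xi.boolHom,
    RingHom.apply_eq_sum_smul_single Xi.boolHom (1 - _), arrowSum, map_sum, Finset.sum_mul,
    Finset.sum_mul]
  refine Finset.sum_congr rfl fun I _ => ?_
  rw [map_sum, Finset.mul_sum]
  refine Finset.sum_congr rfl fun J _ => ?_
  by_cases hI : s ∈ I <;> by_cases hJ : s ∈ J <;>
    simp [hI, hJ, memIndicator, toXi_arrow, Xi.atom]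

end PathAlg

section Isomorphism

variable {S : Type} [Fintype S] [DecidableEq S]

theorem Xi.toPathAlg_comp_toXi :
    (toPathAlg : Xi S →ₐ[ℤ] PathAlg S).comp PathAlg.toXi = AlgHom.id ℤ (PathAlg S) := by
  refine RingQuot.ringQuot_ext' ℤ _ _ (FreeAlgebra.hom_ext (funext ?_))
  rintro (I | a)
  · exact (congrArg toPathAlg (PathAlg.toXi_vertex I)).trans (toPathAlg_atom I)
  · show toPathAlg (PathAlg.toXi (PathAlg.arrow a)) = PathAlg.arrow a
    rw [PathAlg.toXi_arrow, map_mul, map_mul, toPathAlg_atom, toPathAlg_atom, toPathAlg_x,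
      PathAlg.vertex_mul_arrowSum_mul_vertex]

theorem PathAlg.toXi_comp_toPathAlg :
    (toXi : PathAlg S →ₐ[ℤ] Xi S).comp Xi.toPathAlg = AlgHom.id ℤ (Xi S) := by
  refine RingQuot.ringQuot_ext' ℤ _ _ (FreeAlgebra.hom_ext (funext ?_))
  rintro (s | s)
  · show toXi (Xi.toPathAlg (Xi.e s)) = Xi.e s
    rw [Xi.toPathAlg_e, toXi_diag, Xi.boolHom_memIndicator]
  · show toXi (Xi.toPathAlg (Xi.x s)) = Xi.x s
    rw [Xi.toPathAlg_x, toXi_arrowSum]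

end Isomorphism

/-- Ξ is isomorphic to the path algebra ℤQ. -/
theorem xi_iso_pathAlg (S : Type) [Fintype S] [DecidableEq S] :
    Nonempty (Xi S ≃+* PathAlg S) :=
  ⟨(AlgEquiv.ofAlgHom _ _ Xi.toPathAlg_comp_toXi PathAlg.toXi_comp_toPathAlg).toRingEquiv⟩
end

section
/- Let A be a ring, E_I and E_J orthogonal idempotents, X_{IJ} = E_I X_{IJ} E_J and X_{JI} = E_J X_{JI} E_I elements, and suppose (e_α)_{α∈A} (A finite) are pairwise orthogonal idempotents with e_α ≤ E_I and X_{IJ} X_{JI} = ∑_α σ_α e_α for units σ_α. Define ẽ_α := σ_α^{-1} X_{JI} e_α X_{IJ}. Then the ẽ_α are pairwise orthogonal idempotents with ẽ_α ≤ E_J. -/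
/-!
Since the `e α` are orthogonal and the `σ α` central, the spectral decomposition of `X_{IJ} X_{JI}`
gives `e α (X_{IJ} X_{JI}) e β = δ_{αβ} σ_α e_α`. The product `ẽ_α ẽ_β` contains exactly this
middle factor, `σ_α⁻¹ σ_β⁻¹ X_{JI} (e α X_{IJ} X_{JI} e β) X_{IJ}`, which is `ẽ_α` or `0`.
-/

/-- The transported idempotent ẽ_α := σ_α⁻¹ · X_{JI} · e_α · X_{IJ}. -/
def transported {R : Type*} [Ring R] (XIJ XJI eα σinv : R) : R :=
  σinv * XJI * eα * XIJ

lemma OrthogonalIdempotents.mul_sum_mul {R I : Type*} [Semiring R] [Fintype I] [DecidableEq I]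
    {e : I → R} (he : OrthogonalIdempotents e) {c : I → R} (hc : ∀ i j, Commute (c i) (e j))
    (i j : I) : e i * (∑ k, c k * e k) * e j = if i = j then c i * e i else 0 := by
  have hterm : ∀ k, e i * (c k * e k) * e j = c k * (e i * e k * e j) := fun k => by
    rw [(hc k i).symm.left_comm, mul_assoc, mul_assoc]
  simp only [Finset.mul_sum, Finset.sum_mul, hterm, he.mul_eq]
  split_ifs with hij <;> simp [hij, he.mul_eq]

section Transported

variable {R : Type*} [Ring R] {x y e f a b E : R}

lemma transported_mul_transported (hb : ∀ r, Commute b r) :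
    transported x y e a * transported x y f b = a * b * (y * (e * (x * y) * f) * x) := by
  calc a * y * e * x * (b * y * f * x) = a * (y * e * x * b) * (y * f * x) := by noncomm_ring
    _ = a * (b * (y * e * x)) * (y * f * x) := by rw [(hb _).eq]
    _ = a * b * (y * (e * (x * y) * f) * x) := by noncomm_ring

lemma isIdempotentElem_transported {σ : Rˣ} (hσ : ∀ r, Commute (σ : R) r)
    (h : e * (x * y) * e = σ * e) : IsIdempotentElem (transported x y e ↑σ⁻¹) := by
  have hσinv : ∀ r, Commute (↑σ⁻¹ : R) r := fun r => (hσ r).units_inv_left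
  calc transported x y e ↑σ⁻¹ * transported x y e ↑σ⁻¹
      = ↑σ⁻¹ * ↑σ⁻¹ * (y * (σ * e) * x) := by rw [transported_mul_transported hσinv, h]
    _ = ↑σ⁻¹ * (↑σ⁻¹ * σ) * (y * e * x) := by rw [(hσ y).symm.left_comm]; noncomm_ring
    _ = transported x y e ↑σ⁻¹ := by rw [Units.inv_mul, mul_one, transported]; noncomm_ring

lemma transported_mul_transported_eq_zero (hb : ∀ r, Commute b r) (h : e * (x * y) * f = 0) :
    transported x y e a * transported x y f b = 0 := by
  rw [transported_mul_transported hb, h, mul_zero, zero_mul, mul_zero]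

lemma transported_mul_of_mul_eq (h : x * E = x) :
    transported x y e a * E = transported x y e a := by
  rw [transported, mul_assoc, h]

lemma mul_transported_of_mul_eq (ha : Commute E a) (h : E * y = y) :
    E * transported x y e a = transported x y e a := by
  simp only [transported, ← mul_assoc, ha.eq]
  rw [mul_assoc a, h]

end Transported

theorem transported_idempotents_general {R : Type*} [Ring R] (EI EJ XIJ XJI : R)
    (hEJ : EJ * EJ = EJ)
    (hX : XIJ = EI * XIJ * EJ) (hX' : XJI = EJ * XJI * EI)
    {ι : Type*} [Fintype ι] (e : ι → R) (σ : ι → Rˣ)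
    (he : ∀ α, e α * e α = e α)
    (horth : ∀ α β, α ≠ β → e α * e β = 0)
    (hcentral : ∀ α (r : R), (σ α : R) * r = r * (σ α : R))
    (hspec : XIJ * XJI = ∑ α, (σ α : R) * e α) :
    (∀ α, transported XIJ XJI (e α) (((σ α)⁻¹ : Rˣ) : R) *
        transported XIJ XJI (e α) (((σ α)⁻¹ : Rˣ) : R) =
        transported XIJ XJI (e α) (((σ α)⁻¹ : Rˣ) : R)) ∧
    (∀ α β, α ≠ β → transported XIJ XJI (e α) (((σ α)⁻¹ : Rˣ) : R) *
        transported XIJ XJI (e β) (((σ β)⁻¹ : Rˣ) : R) = 0) ∧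
    (∀ α, transported XIJ XJI (e α) (((σ α)⁻¹ : Rˣ) : R) * EJ =
        transported XIJ XJI (e α) (((σ α)⁻¹ : Rˣ) : R) ∧
      EJ * transported XIJ XJI (e α) (((σ α)⁻¹ : Rˣ) : R) =
        transported XIJ XJI (e α) (((σ α)⁻¹ : Rˣ) : R)) := by
  classical
  have hσinv : ∀ α r, Commute (((σ α)⁻¹ : Rˣ) : R) r := fun α r =>
    Commute.units_inv_left (hcentral α r)
  have hmid : ∀ α β, e α * (XIJ * XJI) * e β = if α = β then (σ α : R) * e α else 0 := by
    rw [hspec]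
    exact (OrthogonalIdempotents.mk he horth).mul_sum_mul fun α β => hcentral α (e β)
  have hXE : XIJ * EJ = XIJ := by rw [hX, mul_assoc, hEJ]
  have hEX : EJ * XJI = XJI := by rw [hX', ← mul_assoc, ← mul_assoc, hEJ]
  refine ⟨fun α => ?_, fun α β hne => ?_, fun α => ⟨?_, ?_⟩⟩
  · exact isIdempotentElem_transported (hcentral α) (by simp [hmid])
  · exact transported_mul_transported_eq_zero (hσinv β) (by simp [hmid, hne])
  · exact transported_mul_of_mul_eq hXE
  · exact mul_transported_of_mul_eq (hσinv α _).symm hEX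

/-- Idempotent transport: E_I, E_J orthogonal idempotents, X_{IJ} = E_I X_{IJ} E_J,
X_{JI} = E_J X_{JI} E_I, (e_α) pairwise orthogonal idempotents ≤ E_I with
X_{IJ} X_{JI} = ∑_α σ_α e_α for central units σ_α. Then the elements
ẽ_α := σ_α⁻¹ X_{JI} e_α X_{IJ} are pairwise orthogonal idempotents ≤ E_J. -/
theorem transported_idempotents {R : Type*} [Ring R] (EI EJ XIJ XJI : R)
    (hEI : EI * EI = EI) (hEJ : EJ * EJ = EJ)
    (hIJorth : EI * EJ = 0) (hJIorth : EJ * EI = 0)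
    (hX : XIJ = EI * XIJ * EJ) (hX' : XJI = EJ * XJI * EI)
    {ι : Type*} [Fintype ι] (e : ι → R) (σ : ι → Rˣ)
    (he : ∀ α, e α * e α = e α)
    (horth : ∀ α β, α ≠ β → e α * e β = 0)
    (hle : ∀ α, e α * EI = e α ∧ EI * e α = e α)
    (hcentral : ∀ α (r : R), (σ α : R) * r = r * (σ α : R))
    (hspec : XIJ * XJI = ∑ α, (σ α : R) * e α) :
    (∀ α, transported XIJ XJI (e α) (((σ α)⁻¹ : Rˣ) : R) *
        transported XIJ XJI (e α) (((σ α)⁻¹ : Rˣ) : R) =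
        transported XIJ XJI (e α) (((σ α)⁻¹ : Rˣ) : R)) ∧
    (∀ α β, α ≠ β → transported XIJ XJI (e α) (((σ α)⁻¹ : Rˣ) : R) *
        transported XIJ XJI (e β) (((σ β)⁻¹ : Rˣ) : R) = 0) ∧
    (∀ α, transported XIJ XJI (e α) (((σ α)⁻¹ : Rˣ) : R) * EJ =
        transported XIJ XJI (e α) (((σ α)⁻¹ : Rˣ) : R) ∧
      EJ * transported XIJ XJI (e α) (((σ α)⁻¹ : Rˣ) : R) =
        transported XIJ XJI (e α) (((σ α)⁻¹ : Rˣ) : R)) :=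
  transported_idempotents_general EI EJ XIJ XJI hEJ hX hX' e σ he horth hcentral hspec
end

section
/- In the setting of idempotent transport (E_I, E_J idempotents, X_{IJ} = E_I X_{IJ} E_J, X_{JI} = E_J X_{JI} E_I, pairwise orthogonal idempotents e_α ≤ E_I with X_{IJ}X_{JI} = ∑_α σ_α e_α, σ_α central units, ẽ_α := σ_α^{-1} X_{JI} e_α X_{IJ}): one has X_{IJ} ẽ_α = e_α X_{IJ} and X_{JI} e_α = ẽ_α X_{JI} for all α, and moreover X_{IJ} ẽ_α X_{JI} = σ_α e_α, so transporting twice returns the original idempotents. -/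
namespace OrthogonalIdempotents

variable {R I : Type*} [Semiring R] [Fintype I] {e : I → R}

theorem sum_mul_mul_right (he : OrthogonalIdempotents e) (c : I → R) (i : I) :
    (∑ j, c j * e j) * e i = c i * e i := by
  rw [Finset.sum_mul, Fintype.sum_eq_single i fun j hj => by rw [mul_assoc, he.ortho hj, mul_zero],
    mul_assoc, (he.idem i).eq]

theorem mul_sum_mul_left (he : OrthogonalIdempotents e) {c : I → R} {i : I}
    (hc : ∀ j, Commute (e i) (c j)) : e i * ∑ j, c j * e j = c i * e i := by
  simp only [Finset.mul_sum, ← mul_assoc, (hc _).eq]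
  rw [Fintype.sum_eq_single i fun j hj => by rw [mul_assoc, he.ortho (Ne.symm hj), mul_zero],
    mul_assoc, (he.idem i).eq]

end OrthogonalIdempotents

section Transport

variable {R : Type*} [Ring R] {x y e : R} {s : Rˣ}

theorem mul_transported (hsx : Commute (s : R) x) (hxye : x * y * e = s * e) :
    x * transported x y e ↑s⁻¹ = e * x := by
  calc x * transported x y e ↑s⁻¹ = (↑s⁻¹ * x) * y * e * x := by
        simp only [transported, hsx.units_inv_left.eq, mul_assoc]
    _ = ↑s⁻¹ * (s * e) * x := by rw [← hxye]; noncomm_ring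
    _ = e * x := by rw [← mul_assoc, Units.inv_mul, one_mul]

theorem transported_mul (hsy : Commute (s : R) y) (hexy : e * (x * y) = s * e) :
    transported x y e ↑s⁻¹ * y = y * e := by
  calc transported x y e ↑s⁻¹ * y = ↑s⁻¹ * (y * (e * (x * y))) := by
        simp only [transported, mul_assoc]
    _ = ↑s⁻¹ * (s * (y * e)) := by rw [hexy, ← mul_assoc y, ← hsy.eq, mul_assoc]
    _ = y * e := by rw [← mul_assoc, Units.inv_mul, one_mul]

theorem mul_transported_mul (hsx : Commute (s : R) x) (hxye : x * y * e = s * e)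
    (hexy : e * (x * y) = s * e) : x * transported x y e ↑s⁻¹ * y = s * e := by
  rw [mul_transported hsx hxye, mul_assoc, hexy]

end Transport

theorem transported_intertwine_general {R : Type*} [Ring R] (XIJ XJI : R)
    {ι : Type*} [Fintype ι] (e : ι → R) (σ : ι → Rˣ)
    (he : ∀ α, e α * e α = e α)
    (horth : ∀ α β, α ≠ β → e α * e β = 0)
    (hcentral : ∀ α (r : R), (σ α : R) * r = r * (σ α : R))
    (hspec : XIJ * XJI = ∑ α, (σ α : R) * e α) :
    (∀ α, XIJ * transported XIJ XJI (e α) (((σ α)⁻¹ : Rˣ) : R) = e α * XIJ) ∧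
    (∀ α, XJI * e α = transported XIJ XJI (e α) (((σ α)⁻¹ : Rˣ) : R) * XJI) ∧
    (∀ α, XIJ * transported XIJ XJI (e α) (((σ α)⁻¹ : Rˣ) : R) * XJI = (σ α : R) * e α) := by
  have hidem : OrthogonalIdempotents e := ⟨he, horth⟩
  have hcomm (α : ι) (r : R) : Commute (σ α : R) r := hcentral α r
  have hright (α : ι) : XIJ * XJI * e α = σ α * e α := by
    rw [hspec, hidem.sum_mul_mul_right]
  have hleft (α : ι) : e α * (XIJ * XJI) = σ α * e α := by
    rw [hspec, hidem.mul_sum_mul_left fun β => (hcomm β _).symm]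
  exact ⟨fun α => mul_transported (hcomm α _) (hright α),
    fun α => (transported_mul (hcomm α _) (hleft α)).symm,
    fun α => mul_transported_mul (hcomm α _) (hright α) (hleft α)⟩

/-- Idempotent transport: with E_I, E_J orthogonal idempotents, X_{IJ} = E_I X_{IJ} E_J,
X_{JI} = E_J X_{JI} E_I, (e_α) pairwise orthogonal idempotents ≤ E_I with
X_{IJ} X_{JI} = ∑_α σ_α e_α for central units σ_α, and ẽ_α := σ_α⁻¹ X_{JI} e_α X_{IJ}:
one has X_{IJ} ẽ_α = e_α X_{IJ}, X_{JI} e_α = ẽ_α X_{JI}, and X_{IJ} ẽ_α X_{JI} = σ_α e_α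
(so transporting twice returns the original idempotents). -/
theorem transported_intertwine {R : Type*} [Ring R] (EI EJ XIJ XJI : R)
    (hEI : EI * EI = EI) (hEJ : EJ * EJ = EJ)
    (hIJorth : EI * EJ = 0) (hJIorth : EJ * EI = 0)
    (hX : XIJ = EI * XIJ * EJ) (hX' : XJI = EJ * XJI * EI)
    {ι : Type*} [Fintype ι] (e : ι → R) (σ : ι → Rˣ)
    (he : ∀ α, e α * e α = e α)
    (horth : ∀ α β, α ≠ β → e α * e β = 0)
    (hle : ∀ α, e α * EI = e α ∧ EI * e α = e α)
    (hcentral : ∀ α (r : R), (σ α : R) * r = r * (σ α : R))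
    (hspec : XIJ * XJI = ∑ α, (σ α : R) * e α) :
    (∀ α, XIJ * transported XIJ XJI (e α) (((σ α)⁻¹ : Rˣ) : R) = e α * XIJ) ∧
    (∀ α, XJI * e α = transported XIJ XJI (e α) (((σ α)⁻¹ : Rˣ) : R) * XJI) ∧
    (∀ α, XIJ * transported XIJ XJI (e α) (((σ α)⁻¹ : Rˣ) : R) * XJI = (σ α : R) * e α) :=
  transported_intertwine_general XIJ XJI e σ he horth hcentral hspec
end

section
/- In the setting of idempotent transport, let e_0 := E_I − ∑_α e_α and r := X_{JI} e_0 X_{IJ}. Then r² = 0, r = ẽ_0 r ẽ_0 where ẽ_0 := E_J − ∑_α ẽ_α, and X_{JI} X_{IJ} = ∑_α σ_α ẽ_α + r. In particular, if X_{JI}X_{IJ} is an idempotent then r = 0. -/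
/-- Idempotent transport leftovers: with e_0 := E_I − ∑_α e_α,
r := X_{JI} e_0 X_{IJ} and ẽ_0 := E_J − ∑_α ẽ_α one has r² = 0, r = ẽ_0 r ẽ_0, and
X_{JI} X_{IJ} = ∑_α σ_α ẽ_α + r; in particular r = 0 if X_{JI}X_{IJ} is an idempotent. -/
theorem transported_leftover {R : Type*} [Ring R] (EI EJ XIJ XJI : R)
    (hEI : EI * EI = EI) (hEJ : EJ * EJ = EJ)
    (hIJorth : EI * EJ = 0) (hJIorth : EJ * EI = 0)
    (hX : XIJ = EI * XIJ * EJ) (hX' : XJI = EJ * XJI * EI)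
    {ι : Type*} [Fintype ι] (e : ι → R) (σ : ι → Rˣ)
    (he : ∀ α, e α * e α = e α)
    (horth : ∀ α β, α ≠ β → e α * e β = 0)
    (hle : ∀ α, e α * EI = e α ∧ EI * e α = e α)
    (hcentral : ∀ α (r : R), (σ α : R) * r = r * (σ α : R))
    (hspec : XIJ * XJI = ∑ α, (σ α : R) * e α) :
    (XJI * (EI - ∑ α, e α) * XIJ) * (XJI * (EI - ∑ α, e α) * XIJ) = 0 ∧
    XJI * (EI - ∑ α, e α) * XIJ =
      (EJ - ∑ α, transported XIJ XJI (e α) (((σ α)⁻¹ : Rˣ) : R)) *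
        (XJI * (EI - ∑ α, e α) * XIJ) *
        (EJ - ∑ α, transported XIJ XJI (e α) (((σ α)⁻¹ : Rˣ) : R)) ∧
    XJI * XIJ = (∑ α, (σ α : R) * transported XIJ XJI (e α) (((σ α)⁻¹ : Rˣ) : R)) +
      XJI * (EI - ∑ α, e α) * XIJ ∧
    ((XJI * XIJ) * (XJI * XIJ) = XJI * XIJ → XJI * (EI - ∑ α, e α) * XIJ = 0) := by
  simp only [transported]
  -- basic unit facts
  have hc2 : ∀ α (x y : R), x * ((σ α : R) * y) = (σ α : R) * (x * y) := by
    intro α x y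
    rw [← mul_assoc, ← hcentral α x, mul_assoc]
  have hcentral' : ∀ α (x : R),
      (((σ α)⁻¹ : Rˣ) : R) * x = x * (((σ α)⁻¹ : Rˣ) : R) := by
    intro α x
    calc (((σ α)⁻¹ : Rˣ) : R) * x
        = (((σ α)⁻¹ : Rˣ) : R) * x * ((σ α : R) * (((σ α)⁻¹ : Rˣ) : R)) := by
          rw [Units.mul_inv, mul_one]
      _ = (((σ α)⁻¹ : Rˣ) : R) * (x * (σ α : R)) * (((σ α)⁻¹ : Rˣ) : R) := by
          noncomm_ring
      _ = (((σ α)⁻¹ : Rˣ) : R) * ((σ α : R) * x) * (((σ α)⁻¹ : Rˣ) : R) := by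
          rw [hcentral α x]
      _ = ((((σ α)⁻¹ : Rˣ) : R) * (σ α : R)) * (x * (((σ α)⁻¹ : Rˣ) : R)) := by
          noncomm_ring
      _ = x * (((σ α)⁻¹ : Rˣ) : R) := by rw [Units.inv_mul, one_mul]
  -- corner facts for X's
  have hXl : EI * XIJ = XIJ := by
    nth_rewrite 1 [hX]
    rw [← mul_assoc, ← mul_assoc, hEI]
    exact hX.symm
  have hXr : XIJ * EJ = XIJ := by
    nth_rewrite 1 [hX]
    rw [mul_assoc, hEJ]
    exact hX.symm
  have hX'l : EJ * XJI = XJI := by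
    nth_rewrite 1 [hX']
    rw [← mul_assoc, ← mul_assoc, hEJ]
    exact hX'.symm
  have hX'r : XJI * EI = XJI := by
    nth_rewrite 1 [hX']
    rw [mul_assoc, hEI]
    exact hX'.symm
  -- sum-of-idempotents facts
  have hEe : ∀ α, (∑ β, e β) * e α = e α := by
    intro α
    rw [Finset.sum_mul,
      Finset.sum_eq_single α (fun β _ h => horth β α h)
        (fun h => absurd (Finset.mem_univ α) h), he α]
  have heE : ∀ α, e α * (∑ β, e β) = e α := by
    intro α
    rw [Finset.mul_sum,
      Finset.sum_eq_single α (fun β _ h => horth α β (Ne.symm h))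
        (fun h => absurd (Finset.mem_univ α) h), he α]
  have he0l : ∀ α, (EI - ∑ β, e β) * e α = 0 := by
    intro α; rw [sub_mul, (hle α).2, hEe α, sub_self]
  have he0r : ∀ α, e α * (EI - ∑ β, e β) = 0 := by
    intro α; rw [mul_sub, (hle α).1, heE α, sub_self]
  have hSe0 : (XIJ * XJI) * (EI - ∑ β, e β) = 0 := by
    rw [hspec, Finset.sum_mul]
    apply Finset.sum_eq_zero
    intro α _
    rw [mul_assoc, he0r α, mul_zero]
  have he0S : (EI - ∑ β, e β) * (XIJ * XJI) = 0 := by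
    rw [hspec, Finset.mul_sum]
    apply Finset.sum_eq_zero
    intro α _
    rw [hc2 α, he0l α, mul_zero]
  have heS : ∀ α, e α * (XIJ * XJI) = (σ α : R) * e α := by
    intro α
    rw [hspec, Finset.mul_sum]
    rw [Finset.sum_eq_single α
      (fun β _ h => by rw [hc2 β, horth α β (Ne.symm h), mul_zero])
      (fun h => absurd (Finset.mem_univ α) h)]
    rw [hc2 α, he α]
  have hSe : ∀ α, (XIJ * XJI) * e α = (σ α : R) * e α := by
    intro α
    rw [hspec, Finset.sum_mul]
    rw [Finset.sum_eq_single α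
      (fun β _ h => by rw [mul_assoc, horth β α h, mul_zero])
      (fun h => absurd (Finset.mem_univ α) h)]
    rw [mul_assoc, he α]
  -- abbreviations (propositional)
  have hsum1 : (∑ α, (σ α : R) * ((((σ α)⁻¹ : Rˣ) : R) * XJI * e α * XIJ))
      = XJI * (∑ α, e α) * XIJ := by
    rw [show XJI * (∑ α, e α) * XIJ = ∑ α, XJI * e α * XIJ by
      rw [Finset.mul_sum, Finset.sum_mul]]
    apply Finset.sum_congr rfl
    intro α _
    have h1 : (σ α : R) * ((((σ α)⁻¹ : Rˣ) : R) * XJI * e α * XIJ)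
        = ((σ α : R) * (((σ α)⁻¹ : Rˣ) : R)) * (XJI * e α * XIJ) := by noncomm_ring
    rw [h1, Units.mul_inv, one_mul]
  -- r² = 0
  have hrr : (XJI * (EI - ∑ α, e α) * XIJ) * (XJI * (EI - ∑ α, e α) * XIJ) = 0 := by
    have h1 : (XJI * (EI - ∑ α, e α) * XIJ) * (XJI * (EI - ∑ α, e α) * XIJ)
        = XJI * ((EI - ∑ α, e α) * ((XIJ * XJI) * (EI - ∑ α, e α))) * XIJ := by
      noncomm_ring
    rw [h1, hSe0, mul_zero, mul_zero, zero_mul]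
  -- t α * r = 0 and r * t α = 0
  have htr : ∀ α, ((((σ α)⁻¹ : Rˣ) : R) * XJI * e α * XIJ) *
      (XJI * (EI - ∑ β, e β) * XIJ) = 0 := by
    intro α
    have h1 : ((((σ α)⁻¹ : Rˣ) : R) * XJI * e α * XIJ) *
        (XJI * (EI - ∑ β, e β) * XIJ)
        = (((σ α)⁻¹ : Rˣ) : R) * XJI *
            ((e α * (XIJ * XJI)) * (EI - ∑ β, e β) * XIJ) := by noncomm_ring
    rw [h1, heS α, mul_assoc ((σ α : R)), he0r α, mul_zero, zero_mul, mul_zero]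
  have hrt : ∀ α, (XJI * (EI - ∑ β, e β) * XIJ) *
      ((((σ α)⁻¹ : Rˣ) : R) * XJI * e α * XIJ) = 0 := by
    intro α
    have h1 : (XJI * (EI - ∑ β, e β) * XIJ) *
        ((((σ α)⁻¹ : Rˣ) : R) * XJI * e α * XIJ)
        = ((XJI * (EI - ∑ β, e β) * XIJ) * (((σ α)⁻¹ : Rˣ) : R)) *
            (XJI * e α * XIJ) := by noncomm_ring
    rw [h1, ← hcentral' α]
    have h2 : (((σ α)⁻¹ : Rˣ) : R) * (XJI * (EI - ∑ β, e β) * XIJ) *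
        (XJI * e α * XIJ)
        = (((σ α)⁻¹ : Rˣ) : R) *
            (XJI * ((EI - ∑ β, e β) * (XIJ * XJI)) * (e α * XIJ)) := by noncomm_ring
    rw [h2, he0S, mul_zero, zero_mul, mul_zero]
  have hFr : (∑ α, (((σ α)⁻¹ : Rˣ) : R) * XJI * e α * XIJ) *
      (XJI * (EI - ∑ β, e β) * XIJ) = 0 := by
    rw [Finset.sum_mul]
    exact Finset.sum_eq_zero fun α _ => htr α
  have hrF : (XJI * (EI - ∑ β, e β) * XIJ) *
      (∑ α, (((σ α)⁻¹ : Rˣ) : R) * XJI * e α * XIJ) = 0 := by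
    rw [Finset.mul_sum]
    exact Finset.sum_eq_zero fun α _ => hrt α
  have hEJr : EJ * (XJI * (EI - ∑ β, e β) * XIJ) = XJI * (EI - ∑ β, e β) * XIJ := by
    have h1 : EJ * (XJI * (EI - ∑ β, e β) * XIJ)
        = (EJ * XJI) * (EI - ∑ β, e β) * XIJ := by noncomm_ring
    rw [h1, hX'l]
  have hrEJ : (XJI * (EI - ∑ β, e β) * XIJ) * EJ = XJI * (EI - ∑ β, e β) * XIJ := by
    have h1 : (XJI * (EI - ∑ β, e β) * XIJ) * EJ
        = XJI * (EI - ∑ β, e β) * (XIJ * EJ) := by noncomm_ring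
    rw [h1, hXr]
  -- part 2
  have hpart2 : XJI * (EI - ∑ α, e α) * XIJ =
      (EJ - ∑ α, (((σ α)⁻¹ : Rˣ) : R) * XJI * e α * XIJ) *
        (XJI * (EI - ∑ α, e α) * XIJ) *
        (EJ - ∑ α, (((σ α)⁻¹ : Rˣ) : R) * XJI * e α * XIJ) := by
    have hA : (EJ - ∑ α, (((σ α)⁻¹ : Rˣ) : R) * XJI * e α * XIJ) *
        (XJI * (EI - ∑ α, e α) * XIJ) = XJI * (EI - ∑ α, e α) * XIJ := by
      rw [sub_mul, hFr, sub_zero, hEJr]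
    have hB : (XJI * (EI - ∑ α, e α) * XIJ) *
        (EJ - ∑ α, (((σ α)⁻¹ : Rˣ) : R) * XJI * e α * XIJ)
        = XJI * (EI - ∑ α, e α) * XIJ := by
      rw [mul_sub, hrF, sub_zero, hrEJ]
    rw [hA, hB]
  -- part 3
  have hpart3 : XJI * XIJ =
      (∑ α, (σ α : R) * ((((σ α)⁻¹ : Rˣ) : R) * XJI * e α * XIJ)) +
        XJI * (EI - ∑ α, e α) * XIJ := by
    rw [hsum1]
    have h1 : XJI * (∑ α, e α) * XIJ + XJI * (EI - ∑ α, e α) * XIJ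
        = XJI * EI * XIJ := by noncomm_ring
    rw [h1, hX'r]
  refine ⟨hrr, hpart2, hpart3, ?_⟩
  -- part 4
  intro hP
  have htP : ∀ α, ((((σ α)⁻¹ : Rˣ) : R) * XJI * e α * XIJ) * (XJI * XIJ)
      = XJI * e α * XIJ := by
    intro α
    have h1 : ((((σ α)⁻¹ : Rˣ) : R) * XJI * e α * XIJ) * (XJI * XIJ)
        = (((σ α)⁻¹ : Rˣ) : R) * (XJI * (e α * (XIJ * XJI)) * XIJ) := by noncomm_ring
    rw [h1, heS α, hc2 α, ← mul_assoc, ← mul_assoc, Units.inv_mul, one_mul]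
  have hPt : ∀ α, (XJI * XIJ) * ((((σ α)⁻¹ : Rˣ) : R) * XJI * e α * XIJ)
      = XJI * e α * XIJ := by
    intro α
    have h1 : (XJI * XIJ) * ((((σ α)⁻¹ : Rˣ) : R) * XJI * e α * XIJ)
        = ((XJI * XIJ) * (((σ α)⁻¹ : Rˣ) : R)) * (XJI * e α * XIJ) := by noncomm_ring
    rw [h1, ← hcentral' α]
    have h2 : (((σ α)⁻¹ : Rˣ) : R) * (XJI * XIJ) * (XJI * e α * XIJ)
        = (((σ α)⁻¹ : Rˣ) : R) * (XJI * ((XIJ * XJI) * e α) * XIJ) := by noncomm_ring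
    rw [h2, hSe α, hc2 α, ← mul_assoc, ← mul_assoc, Units.inv_mul, one_mul]
  have hFP : (∑ α, (((σ α)⁻¹ : Rˣ) : R) * XJI * e α * XIJ) * (XJI * XIJ)
      = XJI * (∑ α, e α) * XIJ := by
    rw [Finset.sum_mul, show XJI * (∑ α, e α) * XIJ = ∑ α, XJI * e α * XIJ by
      rw [Finset.mul_sum, Finset.sum_mul]]
    exact Finset.sum_congr rfl fun α _ => htP α
  have hPF : (XJI * XIJ) * (∑ α, (((σ α)⁻¹ : Rˣ) : R) * XJI * e α * XIJ)
      = XJI * (∑ α, e α) * XIJ := by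
    rw [Finset.mul_sum, show XJI * (∑ α, e α) * XIJ = ∑ α, XJI * e α * XIJ by
      rw [Finset.mul_sum, Finset.sum_mul]]
    exact Finset.sum_congr rfl fun α _ => hPt α
  have hEJP : EJ * (XJI * XIJ) = XJI * XIJ := by rw [← mul_assoc, hX'l]
  have hPEJ : (XJI * XIJ) * EJ = XJI * XIJ := by rw [mul_assoc, hXr]
  have hdec : XJI * XIJ = XJI * (∑ α, e α) * XIJ + XJI * (EI - ∑ α, e α) * XIJ := by
    rw [← hsum1]; exact hpart3
  have hl : (EJ - ∑ α, (((σ α)⁻¹ : Rˣ) : R) * XJI * e α * XIJ) * (XJI * XIJ)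
      = XJI * (EI - ∑ α, e α) * XIJ := by
    rw [sub_mul, hFP, hEJP, hdec, add_sub_cancel_left]
  have hr : (XJI * XIJ) * (EJ - ∑ α, (((σ α)⁻¹ : Rˣ) : R) * XJI * e α * XIJ)
      = XJI * (EI - ∑ α, e α) * XIJ := by
    rw [mul_sub, hPF, hPEJ, hdec, add_sub_cancel_left]
  have hre : (XJI * (EI - ∑ α, e α) * XIJ) *
      (EJ - ∑ α, (((σ α)⁻¹ : Rˣ) : R) * XJI * e α * XIJ)
      = XJI * (EI - ∑ α, e α) * XIJ := by
    rw [mul_sub, hrF, sub_zero, hrEJ]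
  calc XJI * (EI - ∑ α, e α) * XIJ
      = (XJI * (EI - ∑ α, e α) * XIJ) *
          (EJ - ∑ α, (((σ α)⁻¹ : Rˣ) : R) * XJI * e α * XIJ) := hre.symm
    _ = ((EJ - ∑ α, (((σ α)⁻¹ : Rˣ) : R) * XJI * e α * XIJ) * (XJI * XIJ)) *
          (EJ - ∑ α, (((σ α)⁻¹ : Rˣ) : R) * XJI * e α * XIJ) := by rw [hl]
    _ = (EJ - ∑ α, (((σ α)⁻¹ : Rˣ) : R) * XJI * e α * XIJ) *
          ((XJI * XIJ) * (XJI * XIJ)) *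
          (EJ - ∑ α, (((σ α)⁻¹ : Rˣ) : R) * XJI * e α * XIJ) := by
        rw [hP]
    _ = ((EJ - ∑ α, (((σ α)⁻¹ : Rˣ) : R) * XJI * e α * XIJ) * (XJI * XIJ)) *
          ((XJI * XIJ) *
            (EJ - ∑ α, (((σ α)⁻¹ : Rˣ) : R) * XJI * e α * XIJ)) := by noncomm_ring
    _ = (XJI * (EI - ∑ α, e α) * XIJ) * (XJI * (EI - ∑ α, e α) * XIJ) := by
        rw [hl, hr]
    _ = 0 := hrr
end

section
/- Let k be a commutative ring, A a k-algebra, (F^λ)_{λ∈Λ} a finite family of pairwise orthogonal idempotents summing to 1, and ⪯ a partial order on Λ such that F^λ A F^μ ≠ 0 implies λ ⪯ μ. Then for any λ ∈ Λ, any product F^λ a_1 a_2 ⋯ a_n F^λ with a_i ∈ A equals the sum over chains λ = λ_0 ⪯ λ_1 ⪯ ⋯ ⪯ λ_n = λ of F^{λ_0} a_1 F^{λ_1} a_2 ⋯ F^{λ_{n-1}} a_n F^{λ_n}, and since λ_0 = λ_n = λ forces all λ_i = λ, one gets F^λ a_1 ⋯ a_n F^λ = (F^λ a_1 F^λ)(F^λ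 a_2 F^λ)⋯(F^λ a_n F^λ). -/
/-!
Inserting `1 = ∑ m, F m` between `a₁` and `a₂ ⋯ aₙ` splits `F l a₁ ⋯ aₙ F l` into the terms
`(F l a₁ F m)(F m a₂ ⋯ aₙ F l)`; such a term is nonzero only if `l ⪯ m ⪯ l`, i.e. `m = l`.
Induction on `n` finishes the proof.
-/

section Sandwich

variable {A : Type*} [Ring A] {Λ : Type*} [Fintype Λ] (F : Λ → A)

theorem sandwich_mul_eq_sum (hidem : ∀ l, F l * F l = F l) (hsum : ∑ l, F l = 1)
    (l n : Λ) (x y : A) :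
    F l * (x * y) * F n = ∑ m, (F l * x * F m) * (F m * y * F n) := by
  calc F l * (x * y) * F n = ∑ m, F l * x * F m * (y * F n) := by
        rw [← Finset.sum_mul, ← Finset.mul_sum, hsum]; noncomm_ring
    _ = ∑ m, (F l * x * F m) * (F m * y * F n) := by
        refine Finset.sum_congr rfl fun m _ => ?_
        simp only [mul_assoc, ← mul_assoc (F m) (F m), hidem]

theorem sandwich_mul_eq_mul_sandwich [PartialOrder Λ]
    (hidem : ∀ l, F l * F l = F l) (hsum : ∑ l, F l = 1)
    (hdown : ∀ l m : Λ, (∃ a : A, F l * a * F m ≠ 0) → l ≤ m) (l : Λ) (x y : A) :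
    F l * (x * y) * F l = (F l * x * F l) * (F l * y * F l) := by
  rw [sandwich_mul_eq_sum F hidem hsum, Finset.sum_eq_single_of_mem l (Finset.mem_univ l)]
  intro m _ hm
  by_contra hne
  have hlm : l ≤ m := hdown l m ⟨x, left_ne_zero_of_mul hne⟩
  have hml : m ≤ l := hdown m l ⟨y, right_ne_zero_of_mul hne⟩
  exact hm (le_antisymm hml hlm)

end Sandwich

theorem sandwich_prod_eq_general {A : Type*} [Ring A]
    {Λ : Type*} [Fintype Λ] [PartialOrder Λ] (F : Λ → A)
    (hidem : ∀ l, F l * F l = F l)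
    (hsum : ∑ l, F l = 1)
    (hdown : ∀ l m : Λ, (∃ a : A, F l * a * F m ≠ 0) → l ≤ m)
    (l : Λ) (as : List A) (h : as ≠ []) :
    F l * as.prod * F l = (as.map (fun a => F l * a * F l)).prod := by
  induction as with
  | nil => exact absurd rfl h
  | cons a rest ih =>
    rcases eq_or_ne rest [] with rfl | hrest
    · simp
    · rw [List.prod_cons, List.map_cons, List.prod_cons,
        sandwich_mul_eq_mul_sandwich F hidem hsum hdown, ih hrest]

/-- Let A be a k-algebra, (F^λ) a finite complete family of pairwise orthogonal
idempotents, and ⪯ a partial order on the index set such that F^λ A F^μ ≠ 0 implies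
λ ⪯ μ. Then for any λ and any nonempty list a_1, …, a_n of elements of A,
F^λ a_1 ⋯ a_n F^λ = (F^λ a_1 F^λ)(F^λ a_2 F^λ)⋯(F^λ a_n F^λ). -/
theorem sandwich_prod_eq {k A : Type*} [CommRing k] [Ring A] [Algebra k A]
    {Λ : Type*} [Fintype Λ] [PartialOrder Λ] (F : Λ → A)
    (hidem : ∀ l, F l * F l = F l)
    (horth : ∀ l m, l ≠ m → F l * F m = 0)
    (hsum : ∑ l, F l = 1)
    (hdown : ∀ l m : Λ, (∃ a : A, F l * a * F m ≠ 0) → l ≤ m)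
    (l : Λ) (as : List A) (h : as ≠ []) :
    F l * as.prod * F l = (as.map (fun a => F l * a * F l)).prod :=
  sandwich_prod_eq_general F hidem hsum hdown l as h
end
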